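/- Let d ≥ 2, let 0 < α ≤ 1, let B₊, B₋ ⊂ ℝ^d be disjoint open balls with |B₊| ≥ |B₋| > 0, and let χ_α be the bang-bang function associated with B₋ and α. Then ((|B₊|^{-1} + α² |B₋|^{-1}) / (|B₊|^{-1-2/d} + α² |B₋|^{-1-2/d})) · λ₁^{χ_α}(B₊ ∪ B₋) ≤ |B|^{2/d} λ₁(B), where B is the open unit ball of ℝ^d. -/

import Mathlib

open MeasureTheory Metric Set Filter

open scoped Classical ENNReal

noncomputable section

/-- The Rayleigh quotient of `u : ℝ^d → ℝ`. -/
def rayleigh (d : ℕ) (u : EuclideanSpace ℝ (Fin d) → ℝ) : ℝ :=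
  (∫ x, ‖gradient u x‖ ^ 2) / (∫ x, (u x) ^ 2)

/-- A trial function for the Dirichlet eigenvalue on `Ω`: Lipschitz, vanishing outside `Ω`,
and not almost everywhere zero. -/
def IsDirTrial (d : ℕ) (Ω : Set (EuclideanSpace ℝ (Fin d)))
    (u : EuclideanSpace ℝ (Fin d) → ℝ) : Prop :=
  (∃ K, LipschitzWith K u) ∧ (∀ x ∉ Ω, u x = 0) ∧ ¬ (u =ᵐ[volume] fun _ => (0 : ℝ))

/-- The first Dirichlet eigenvalue of `Ω`. -/
def dirichletEV (d : ℕ) (Ω : Set (EuclideanSpace ℝ (Fin d))) : ℝ :=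
  sInf { r | ∃ u, IsDirTrial d Ω u ∧ rayleigh d u = r }

/-- The first twisted eigenvalue of `Ω` with orthogonality constraint `g`. -/
def twistedEV (d : ℕ) (Ω : Set (EuclideanSpace ℝ (Fin d)))
    (g : EuclideanSpace ℝ (Fin d) → ℝ) : ℝ :=
  sInf { r | ∃ u, IsDirTrial d Ω u ∧ (∫ x, u x * g x) = 0 ∧ rayleigh d u = r }

/-- `u` is a minimizer for the first twisted eigenvalue `λ₁^g(Ω)`. -/
def IsTwistedMin (d : ℕ) (Ω : Set (EuclideanSpace ℝ (Fin d)))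
    (g u : EuclideanSpace ℝ (Fin d) → ℝ) : Prop :=
  IsDirTrial d Ω u ∧ (∫ x, u x * g x) = 0 ∧ rayleigh d u = twistedEV d Ω g

/-- The bang-bang function equal to `1` on `Bm` and `α` elsewhere. -/
def chiBang (d : ℕ) (α : ℝ) (Bm : Set (EuclideanSpace ℝ (Fin d))) :
    EuclideanSpace ℝ (Fin d) → ℝ :=
  fun x => if x ∈ Bm then 1 else α

/-!
Rescale a trial function `v` of the unit ball into both balls, `v₊ x = v ((x - c₊) / r₊)` and
`v₋` likewise, and test the twisted problem with `u = r₋ᵈ v₊ - α r₊ᵈ v₋`. Since `∫ v± = r±ᵈ ∫ v`,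
`u` is orthogonal to `χ_α`. The two pieces have disjoint supports, and rescaling by `r` multiplies
`∫ v²` by `rᵈ` and `∫ |∇v|²` by `rᵈ⁻²`, so `R(u)` is an explicit multiple of `R(v)`; writing
`|B±| = r±ᵈ |B|`, that multiple is `|B|^{2/d}` divided by the constant on the left. Taking the
infimum over `v` gives the bound.
-/
open scoped NNReal Topology

theorem eventuallyEq_zero_of_notMem_closure {X M : Type*} [TopologicalSpace X] [Zero M]
    {f : X → M} {U : Set X} {x : X} (hf : ∀ y ∉ U, f y = 0) (hx : x ∉ closure U) :
    f =ᶠ[𝓝 x] 0 :=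
  eventuallyEq_of_mem (isClosed_closure.isOpen_compl.mem_nhds hx) fun y hy =>
    hf y fun h => hy (subset_closure h)

theorem hasCompactSupport_of_forall_notMem_ball {X M : Type*} [PseudoMetricSpace X]
    [ProperSpace X] [Zero M] {f : X → M} {c : X} {r : ℝ} (hf : ∀ x ∉ ball c r, f x = 0) :
    HasCompactSupport f :=
  HasCompactSupport.intro (isCompact_closedBall c r) fun x hx =>
    hf x fun h => hx (ball_subset_closedBall h)

theorem not_ae_eq_zero_of_integral_sq_ne_zero {X : Type*} [MeasurableSpace X] {μ : Measure X}
    {f : X → ℝ} (h : ∫ x, f x ^ 2 ∂μ ≠ 0) : ¬ f =ᵐ[μ] 0 :=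
  fun hf => h (integral_eq_zero_of_ae (hf.mono fun x hx => by simp [hx]))

section ContinuousCompactSupport

variable {X : Type*} [TopologicalSpace X] [MeasurableSpace X] [OpensMeasurableSpace X]
  {μ : Measure X} [IsLocallyFiniteMeasure μ] {f : X → ℝ}

theorem Continuous.integrable_sq_of_hasCompactSupport (hf : Continuous f)
    (hfc : HasCompactSupport f) : Integrable (fun x => f x ^ 2) μ := by
  have hfc2 : HasCompactSupport (fun x => f x ^ 2) :=
    hfc.comp_left (g := fun t : ℝ => t ^ 2) (by simp)
  exact (hf.pow 2).integrable_of_hasCompactSupport hfc2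

theorem Continuous.integral_sq_pos_of_hasCompactSupport (hf : Continuous f)
    (hfc : HasCompactSupport f) (hne : ¬ f =ᵐ[μ] 0) : 0 < ∫ x, f x ^ 2 ∂μ := by
  refine (integral_nonneg fun x => sq_nonneg (f x)).lt_of_ne fun h => hne ?_
  filter_upwards [(integral_eq_zero_iff_of_nonneg (fun x => sq_nonneg (f x))
    (hf.integrable_sq_of_hasCompactSupport hfc)).1 h.symm] with x hx
  simpa using hx

end ContinuousCompactSupport

section Gradient

variable {F : Type*} [NormedAddCommGroup F] [InnerProductSpace ℝ F] [CompleteSpace F]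
  {f g : F → ℝ} {x : F}

theorem LipschitzWith.norm_gradient_le {K : ℝ≥0} (hf : LipschitzWith K f) (x : F) :
    ‖gradient f x‖ ≤ K := by
  rw [gradient, LinearIsometryEquiv.norm_map]
  exact norm_fderiv_le_of_lipschitz ℝ hf

theorem gradient_const_mul (a : ℝ) (f : F → ℝ) (x : F) :
    gradient (fun y => a * f y) x = a • gradient f x := by
  rw [gradient, gradient, ← map_smul]
  exact congrArg _ (congrFun (fderiv_const_smul_field (f := f) a) x)

theorem gradient_comp_inv_smul_sub (r : ℝ) (c : F) (f : F → ℝ) (x : F) :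
    gradient (fun y => f (r⁻¹ • (y - c))) x = r⁻¹ • gradient f (r⁻¹ • (x - c)) := by
  rw [gradient, gradient, ← map_smul]
  congr 1
  simp_rw [sub_eq_add_neg]
  rw [fderiv_comp_add_right (f := fun y => f (r⁻¹ • y)), fderiv_comp_smul]

theorem Filter.EventuallyEq.gradient_eq_zero (h : f =ᶠ[𝓝 x] 0) : gradient f x = 0 := by
  rw [h.gradient_eq]
  exact gradient_fun_const x 0

theorem HasCompactSupport.gradient (hf : HasCompactSupport f) :
    HasCompactSupport (gradient f) :=
  (hf.fderiv ℝ).comp_left (map_zero (InnerProductSpace.toDual ℝ F).symm)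

theorem norm_gradient_add_sq_of_eventuallyEq_zero (hg : g =ᶠ[𝓝 x] 0) :
    ‖gradient (f + g) x‖ ^ 2 = ‖gradient f x‖ ^ 2 + ‖gradient g x‖ ^ 2 := by
  have hfg : f + g =ᶠ[𝓝 x] f := by
    filter_upwards [hg] with y hy
    simp [hy]
  simp [hfg.gradient_eq, hg.gradient_eq_zero]

theorem ae_norm_gradient_add_sq [MeasurableSpace F] {μ : Measure F} {U V : Set F}
    (hU : IsOpen U) (hUV : Disjoint U V) (hμU : μ (frontier U) = 0)
    (hf : ∀ y ∉ U, f y = 0) (hg : ∀ y ∉ V, g y = 0) :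
    ∀ᵐ x ∂μ, ‖gradient (f + g) x‖ ^ 2 = ‖gradient f x‖ ^ 2 + ‖gradient g x‖ ^ 2 := by
  -- off `frontier U`, `x` avoids `closure U` or `closure V`, so `f` or `g` vanishes near `x`
  filter_upwards [measure_eq_zero_iff_ae_notMem.1 hμU] with x hx
  by_cases hxU : x ∈ closure U
  · have hxV : x ∉ closure V := fun hxV => hx ⟨hxU, by
      rw [hU.interior_eq]
      exact fun h => (hUV.closure_right hU).notMem_of_mem_left h hxV⟩
    exact norm_gradient_add_sq_of_eventuallyEq_zero (eventuallyEq_zero_of_notMem_closure hg hxV)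
  · rw [add_comm f g, add_comm (‖gradient f x‖ ^ 2)]
    exact norm_gradient_add_sq_of_eventuallyEq_zero (eventuallyEq_zero_of_notMem_closure hf hxU)

end Gradient

section Integrals

variable {F : Type*} [NormedAddCommGroup F] [InnerProductSpace ℝ F] [FiniteDimensional ℝ F]
  [MeasurableSpace F] [BorelSpace F] {μ : Measure F} [μ.IsAddHaarMeasure]
  {f : F → ℝ} {K : ℝ≥0}

theorem measurable_gradient (f : F → ℝ) : Measurable (gradient f) :=
  (InnerProductSpace.toDual ℝ F).symm.continuous.measurable.comp (measurable_fderiv ℝ f)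

theorem LipschitzWith.integrable_norm_gradient_sq (hf : LipschitzWith K f)
    (hfc : HasCompactSupport f) : Integrable (fun x => ‖gradient f x‖ ^ 2) μ := by
  rw [← memLp_one_iff_integrable]
  refine HasCompactSupport.memLp_of_bound
    (hfc.gradient.comp_left (g := fun w => ‖w‖ ^ 2) (by simp))
    ((measurable_gradient f).norm.pow_const 2).aestronglyMeasurable (K ^ 2)
    (ae_of_all _ fun x => ?_)
  rw [norm_pow, norm_norm]
  exact pow_le_pow_left₀ (norm_nonneg _) (hf.norm_gradient_le x) 2

theorem integral_comp_inv_smul_sub (f : F → ℝ) {r : ℝ} (hr : 0 ≤ r) (c : F) :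
    ∫ x, f (r⁻¹ • (x - c)) ∂μ = r ^ Module.finrank ℝ F * ∫ x, f x ∂μ := by
  rw [integral_sub_right_eq_self (fun x => f (r⁻¹ • x)) c,
    Measure.integral_comp_inv_smul_of_nonneg μ f hr, smul_eq_mul]

end Integrals

section ScaledCopy

variable {F : Type*} [NormedAddCommGroup F] [InnerProductSpace ℝ F]

def scaledCopy (a r : ℝ) (c : F) (v : F → ℝ) : F → ℝ := fun x => a * v (r⁻¹ • (x - c))

variable {a b r rp rm : ℝ} {c cp cm : F} {v : F → ℝ} {K : ℝ≥0}

theorem scaledCopy_eq_zero_of_notMem_ball (hr : 0 < r) (hv : ∀ y ∉ ball (0 : F) 1, v y = 0)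
    {x : F} (hx : x ∉ ball c r) : scaledCopy a r c v x = 0 := by
  rw [scaledCopy, hv _, mul_zero]
  rw [mem_ball, dist_zero_right, norm_smul, norm_inv, Real.norm_eq_abs, abs_of_pos hr, not_lt,
    le_inv_mul_iff₀ hr, mul_one, ← dist_eq_norm]
  exact not_lt.1 hx

theorem LipschitzWith.scaledCopy (hv : LipschitzWith K v) :
    LipschitzWith (‖a‖₊ * (K * ‖r⁻¹‖₊)) (scaledCopy a r c v) := by
  have := (lipschitzWith_smul a).comp
    (hv.comp ((lipschitzWith_smul r⁻¹).comp (IsometryEquiv.subRight c).isometry.lipschitz))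
  rw [mul_one] at this
  exact this

theorem scaledCopy_mul_scaledCopy_eq_zero (hrp : 0 < rp) (hrm : 0 < rm)
    (hdisj : Disjoint (ball cp rp) (ball cm rm)) (hv : ∀ y ∉ ball (0 : F) 1, v y = 0) (x : F) :
    scaledCopy a rp cp v x * scaledCopy b rm cm v x = 0 := by
  by_cases hx : x ∈ ball cp rp
  · rw [scaledCopy_eq_zero_of_notMem_ball hrm hv (disjoint_left.1 hdisj hx), mul_zero]
  · rw [scaledCopy_eq_zero_of_notMem_ball hrp hv hx, zero_mul]

theorem gradient_scaledCopy [CompleteSpace F] (x : F) :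
    gradient (scaledCopy a r c v) x = (a * r⁻¹) • gradient v (r⁻¹ • (x - c)) := by
  change gradient (fun y => a * v (r⁻¹ • (y - c))) x = _
  rw [gradient_const_mul, gradient_comp_inv_smul_sub, smul_smul]

variable [FiniteDimensional ℝ F] [MeasurableSpace F] [BorelSpace F]
  {μ : Measure F} [μ.IsAddHaarMeasure]

theorem integral_scaledCopy (hr : 0 ≤ r) :
    ∫ x, scaledCopy a r c v x ∂μ = a * r ^ Module.finrank ℝ F * ∫ x, v x ∂μ := by
  simp only [scaledCopy]
  rw [integral_const_mul, integral_comp_inv_smul_sub v hr, mul_assoc]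

theorem integral_scaledCopy_sq (hr : 0 ≤ r) :
    ∫ x, scaledCopy a r c v x ^ 2 ∂μ = a ^ 2 * r ^ Module.finrank ℝ F * ∫ x, v x ^ 2 ∂μ := by
  simp only [scaledCopy, mul_pow]
  rw [integral_const_mul, integral_comp_inv_smul_sub (fun y => v y ^ 2) hr, mul_assoc]

theorem integral_norm_gradient_scaledCopy_sq (hr : 0 ≤ r) :
    ∫ x, ‖gradient (scaledCopy a r c v) x‖ ^ 2 ∂μ
      = (a / r) ^ 2 * r ^ Module.finrank ℝ F * ∫ x, ‖gradient v x‖ ^ 2 ∂μ := by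
  simp only [gradient_scaledCopy, norm_smul, mul_pow, Real.norm_eq_abs, sq_abs]
  rw [integral_const_mul, integral_comp_inv_smul_sub (fun y => ‖gradient v y‖ ^ 2) hr]
  ring

theorem integral_sq_scaledCopy_add (hrp : 0 < rp) (hrm : 0 < rm)
    (hdisj : Disjoint (ball cp rp) (ball cm rm)) (hK : LipschitzWith K v)
    (hv : ∀ y ∉ ball (0 : F) 1, v y = 0) :
    ∫ x, (scaledCopy a rp cp v + scaledCopy b rm cm v) x ^ 2 ∂μ
      = (a ^ 2 * rp ^ Module.finrank ℝ F + b ^ 2 * rm ^ Module.finrank ℝ F) *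
          ∫ x, v x ^ 2 ∂μ := by
  have hsq (x : F) : (scaledCopy a rp cp v + scaledCopy b rm cm v) x ^ 2
      = scaledCopy a rp cp v x ^ 2 + scaledCopy b rm cm v x ^ 2 := by
    rw [Pi.add_apply]
    linear_combination 2 * scaledCopy_mul_scaledCopy_eq_zero (a := a) (b := b) hrp hrm hdisj hv x
  have hint (a r : ℝ) (c : F) (hr : 0 < r) : Integrable (fun x => scaledCopy a r c v x ^ 2) μ :=
    hK.scaledCopy.continuous.integrable_sq_of_hasCompactSupport
      (hasCompactSupport_of_forall_notMem_ball fun _ => scaledCopy_eq_zero_of_notMem_ball hr hv)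
  simp_rw [hsq]
  rw [integral_add (hint a rp cp hrp) (hint b rm cm hrm), integral_scaledCopy_sq hrp.le,
    integral_scaledCopy_sq hrm.le]
  ring

theorem integral_norm_gradient_sq_scaledCopy_add (hrp : 0 < rp) (hrm : 0 < rm)
    (hdisj : Disjoint (ball cp rp) (ball cm rm)) (hK : LipschitzWith K v)
    (hv : ∀ y ∉ ball (0 : F) 1, v y = 0) :
    ∫ x, ‖gradient (scaledCopy a rp cp v + scaledCopy b rm cm v) x‖ ^ 2 ∂μ
      = ((a / rp) ^ 2 * rp ^ Module.finrank ℝ F + (b / rm) ^ 2 * rm ^ Module.finrank ℝ F) *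
          ∫ x, ‖gradient v x‖ ^ 2 ∂μ := by
  have hint (a r : ℝ) (c : F) (hr : 0 < r) :
      Integrable (fun x => ‖gradient (scaledCopy a r c v) x‖ ^ 2) μ :=
    hK.scaledCopy.integrable_norm_gradient_sq
      (hasCompactSupport_of_forall_notMem_ball fun _ => scaledCopy_eq_zero_of_notMem_ball hr hv)
  have hfrontier : μ (frontier (ball cp rp)) = 0 := by
    rw [frontier_ball cp hrp.ne']
    exact Measure.addHaar_sphere_of_ne_zero μ cp hrp.ne'
  rw [integral_congr_ae (ae_norm_gradient_add_sq isOpen_ball hdisj hfrontier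
      (fun _ => scaledCopy_eq_zero_of_notMem_ball hrp hv)
      (fun _ => scaledCopy_eq_zero_of_notMem_ball hrm hv)),
    integral_add (hint a rp cp hrp) (hint b rm cm hrm),
    integral_norm_gradient_scaledCopy_sq hrp.le, integral_norm_gradient_scaledCopy_sq hrm.le]
  ring

end ScaledCopy

section Euclidean

variable {d : ℕ}

local notation "E" => EuclideanSpace ℝ (Fin d)

theorem rayleigh_nonneg (u : E → ℝ) : 0 ≤ rayleigh d u :=
  div_nonneg (integral_nonneg fun _ => sq_nonneg _) (integral_nonneg fun _ => sq_nonneg _)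

theorem twistedEV_le_rayleigh {Ω : Set E} {g u : E → ℝ} (hu : IsDirTrial d Ω u)
    (hug : ∫ x, u x * g x = 0) : twistedEV d Ω g ≤ rayleigh d u :=
  csInf_le ⟨0, by rintro _ ⟨w, -, -, rfl⟩; exact rayleigh_nonneg w⟩ ⟨u, hu, hug, rfl⟩

theorem le_dirichletEV {Ω : Set E} {b : ℝ} (hne : ∃ u, IsDirTrial d Ω u)
    (h : ∀ u, IsDirTrial d Ω u → b ≤ rayleigh d u) : b ≤ dirichletEV d Ω := by
  obtain ⟨u, hu⟩ := hne
  exact le_csInf ⟨_, u, hu, rfl⟩ (by rintro _ ⟨w, hw, rfl⟩; exact h w hw)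

theorem exists_isDirTrial_ball (c : E) {r : ℝ} (hr : 0 < r) : ∃ u, IsDirTrial d (ball c r) u := by
  refine ⟨fun x => max (r - dist x c) 0, ⟨1, ?_⟩, fun x hx => ?_, fun h => ?_⟩
  · simpa using ((LipschitzWith.const r).sub (LipschitzWith.dist_left c)).max_const 0
  · exact max_eq_right (by linarith [not_lt.1 (mem_ball.not.1 hx)])
  · have hsub : ball c r ⊆ {x | ¬ max (r - dist x c) 0 = 0} := fun x hx =>
      (lt_max_of_lt_left (sub_pos.2 (mem_ball.1 hx))).ne'
    exact (measure_ball_pos volume c hr).ne' (measure_mono_null hsub (ae_iff.1 h))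

theorem toReal_volume_ball (c : E) {r : ℝ} (hr : 0 < r) :
    (volume (ball c r)).toReal = r ^ d * (volume (ball (0 : E) 1)).toReal := by
  rw [Measure.addHaar_ball_of_pos volume c hr, finrank_euclideanSpace_fin, ENNReal.toReal_mul,
    ENNReal.toReal_ofReal (by positivity)]

theorem toReal_volume_ball_rpow (hd : d ≠ 0) (c : E) {r : ℝ} (hr : 0 < r) :
    (volume (ball c r)).toReal ^ (-(1 : ℝ) - 2 / d)
      = (r ^ (d + 2) * (volume (ball (0 : E) 1)).toReal *
          (volume (ball (0 : E) 1)).toReal ^ ((2 : ℝ) / d))⁻¹ := by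
  have hω : 0 ≤ (volume (ball (0 : E) 1)).toReal := ENNReal.toReal_nonneg
  have hrd : (r ^ d) ^ ((2 : ℝ) / d) = r ^ 2 := by
    rw [← Real.rpow_natCast, ← Real.rpow_mul hr.le, mul_div_cancel₀ _ (Nat.cast_ne_zero.2 hd)]
    norm_num
  rw [toReal_volume_ball c hr, show -(1 : ℝ) - 2 / d = -(1 + 2 / d) by ring,
    Real.rpow_neg (by positivity), Real.rpow_add' (by positivity) (by positivity), Real.rpow_one,
    Real.mul_rpow (by positivity) hω, hrd]
  ring

theorem integral_scaledCopy_add_mul_chiBang {α a b rp rm : ℝ} {cp cm : E} {v : E → ℝ}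
    {K : ℝ≥0} (hrp : 0 < rp) (hrm : 0 < rm) (hdisj : Disjoint (ball cp rp) (ball cm rm))
    (hK : LipschitzWith K v) (hv : ∀ y ∉ ball (0 : E) 1, v y = 0) :
    ∫ x, (scaledCopy a rp cp v + scaledCopy b rm cm v) x * chiBang d α (ball cm rm) x
      = (α * a * rp ^ d + b * rm ^ d) * ∫ x, v x := by
  have hpoint (x : E) : (scaledCopy a rp cp v + scaledCopy b rm cm v) x * chiBang d α (ball cm rm) x
      = α * scaledCopy a rp cp v x + scaledCopy b rm cm v x := by
    rw [Pi.add_apply, chiBang]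
    split_ifs with hx
    · rw [scaledCopy_eq_zero_of_notMem_ball hrp hv (disjoint_right.1 hdisj hx)]
      ring
    · rw [scaledCopy_eq_zero_of_notMem_ball hrm hv hx]
      ring
  have hint (a r : ℝ) (c : E) (hr : 0 < r) : Integrable (scaledCopy a r c v) :=
    hK.scaledCopy.continuous.integrable_of_hasCompactSupport
      (hasCompactSupport_of_forall_notMem_ball fun _ => scaledCopy_eq_zero_of_notMem_ball hr hv)
  simp_rw [hpoint]
  rw [integral_add ((hint a rp cp hrp).const_mul α) (hint b rm cm hrm), integral_const_mul,
    integral_scaledCopy hrp.le, integral_scaledCopy hrm.le, finrank_euclideanSpace_fin]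
  ring

theorem rayleigh_scaledCopy_add {a b rp rm : ℝ} {cp cm : E} {v : E → ℝ} {K : ℝ≥0}
    (hrp : 0 < rp) (hrm : 0 < rm) (hdisj : Disjoint (ball cp rp) (ball cm rm))
    (hK : LipschitzWith K v) (hv : ∀ y ∉ ball (0 : E) 1, v y = 0) :
    rayleigh d (scaledCopy a rp cp v + scaledCopy b rm cm v)
      = ((a / rp) ^ 2 * rp ^ d + (b / rm) ^ 2 * rm ^ d) / (a ^ 2 * rp ^ d + b ^ 2 * rm ^ d) *
          rayleigh d v := by
  rw [rayleigh, rayleigh, integral_sq_scaledCopy_add hrp hrm hdisj hK hv,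
    integral_norm_gradient_sq_scaledCopy_add hrp hrm hdisj hK hv, finrank_euclideanSpace_fin,
    mul_div_mul_comm]

theorem twistedEV_union_ball_le {α rp rm : ℝ} {cp cm : E} {v : E → ℝ} (hrp : 0 < rp)
    (hrm : 0 < rm) (hdisj : Disjoint (ball cp rp) (ball cm rm)) (hv : IsDirTrial d (ball 0 1) v) :
    twistedEV d (ball cp rp ∪ ball cm rm) (chiBang d α (ball cm rm))
      ≤ ((rp ^ (d + 2))⁻¹ + α ^ 2 * (rm ^ (d + 2))⁻¹) / ((rp ^ d)⁻¹ + α ^ 2 * (rm ^ d)⁻¹) *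
          rayleigh d v := by
  obtain ⟨⟨K, hK⟩, hv0, hvne⟩ := hv
  -- the weights make the two contributions to `∫ u * χ_α` cancel
  set u := scaledCopy (rm ^ d) rp cp v + scaledCopy (-(α * rp ^ d)) rm cm v
  have hF : 0 < ∫ x, v x ^ 2 :=
    hK.continuous.integral_sq_pos_of_hasCompactSupport
      (hasCompactSupport_of_forall_notMem_ball hv0) hvne
  have hu : IsDirTrial d (ball cp rp ∪ ball cm rm) u := by
    refine ⟨⟨_, hK.scaledCopy.add hK.scaledCopy⟩, fun x hx => ?_,
      not_ae_eq_zero_of_integral_sq_ne_zero ?_⟩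
    · rw [mem_union, not_or] at hx
      simp only [u, Pi.add_apply, scaledCopy_eq_zero_of_notMem_ball hrp hv0 hx.1,
        scaledCopy_eq_zero_of_notMem_ball hrm hv0 hx.2, add_zero]
    · rw [integral_sq_scaledCopy_add hrp hrm hdisj hK hv0]
      positivity
  have horth : ∫ x, u x * chiBang d α (ball cm rm) x = 0 := by
    rw [integral_scaledCopy_add_mul_chiBang hrp hrm hdisj hK hv0]
    ring
  calc twistedEV d (ball cp rp ∪ ball cm rm) (chiBang d α (ball cm rm))
      ≤ rayleigh d u := twistedEV_le_rayleigh hu horth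
    _ = _ := by
      rw [rayleigh_scaledCopy_add hrp hrm hdisj hK hv0]
      congr 1
      field_simp
      ring

end Euclidean

theorem stmt10_general (d : ℕ) (hd : 2 ≤ d) (α : ℝ)
    (cp cm : EuclideanSpace ℝ (Fin d)) (rp rm : ℝ) (hrp : 0 < rp) (hrm : 0 < rm)
    (hdisj : Disjoint (ball cp rp) (ball cm rm)) :
    ((volume (ball cp rp)).toReal⁻¹ + α ^ 2 * (volume (ball cm rm)).toReal⁻¹) /
        ((volume (ball cp rp)).toReal ^ (-(1 : ℝ) - 2 / d) +
          α ^ 2 * (volume (ball cm rm)).toReal ^ (-(1 : ℝ) - 2 / d)) *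
      twistedEV d (ball cp rp ∪ ball cm rm) (chiBang d α (ball cm rm)) ≤
    (volume (ball (0 : EuclideanSpace ℝ (Fin d)) 1)).toReal ^ ((2 : ℝ) / d) *
      dirichletEV d (ball (0 : EuclideanSpace ℝ (Fin d)) 1) := by
  have hω : 0 < (volume (ball (0 : EuclideanSpace ℝ (Fin d)) 1)).toReal :=
    ENNReal.toReal_pos (measure_ball_pos volume _ one_pos).ne' measure_ball_lt_top.ne
  have hW : 0 < (volume (ball (0 : EuclideanSpace ℝ (Fin d)) 1)).toReal ^ ((2 : ℝ) / d) :=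
    Real.rpow_pos_of_pos hω _
  rw [toReal_volume_ball_rpow (by omega) cp hrp, toReal_volume_ball_rpow (by omega) cm hrm,
    toReal_volume_ball cp hrp, toReal_volume_ball cm hrm]
  refine (div_le_iff₀' hW).1 (le_dirichletEV (exists_isDirTrial_ball 0 one_pos) fun v hv => ?_)
  rw [div_le_iff₀' hW]
  refine (mul_le_mul_of_nonneg_left (twistedEV_union_ball_le hrp hrm hdisj hv)
    (by positivity)).trans_eq ?_
  rw [← mul_assoc]
  congr 1
  field_simp

/-- an upper bound for the twisted eigenvalue of two disjoint balls with a
bang-bang constraint, in terms of the first Dirichlet eigenvalue of a ball. -/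
theorem stmt10 (d : ℕ) (hd : 2 ≤ d) (α : ℝ) (hα0 : 0 < α) (hα1 : α ≤ 1)
    (cp cm : EuclideanSpace ℝ (Fin d)) (rp rm : ℝ) (hrp : 0 < rp) (hrm : 0 < rm)
    (hdisj : Disjoint (ball cp rp) (ball cm rm))
    (hmeas : volume (ball cm rm) ≤ volume (ball cp rp)) :
    ((volume (ball cp rp)).toReal⁻¹ + α ^ 2 * (volume (ball cm rm)).toReal⁻¹) /
        ((volume (ball cp rp)).toReal ^ (-(1 : ℝ) - 2 / d) +
          α ^ 2 * (volume (ball cm rm)).toReal ^ (-(1 : ℝ) - 2 / d)) *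
      twistedEV d (ball cp rp ∪ ball cm rm) (chiBang d α (ball cm rm)) ≤
    (volume (ball (0 : EuclideanSpace ℝ (Fin d)) 1)).toReal ^ ((2 : ℝ) / d) *
      dirichletEV d (ball (0 : EuclideanSpace ℝ (Fin d)) 1) :=
  stmt10_general d hd α cp cm rp rm hrp hrm hdisj
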